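/- Let R > 0, 0 < β < π, k > 0, and define μ(s) = √k · s sin β / √(R - s cos β + r(s)) with r(s) = √(R² + s² - 2sR cos β), all square roots principal. Then μ is analytic on the cut plane C_{R,β} = ℂ \ {R cos β + it : |t| ≥ R sin β}, and for real s > 0 it satisfies μ(s)² = k(s cos β - R + r(s)) and μ(s) > 0. -/

import Mathlib

/-- The cut plane `C_{R,β} = ℂ \ {R cos β + it : |t| ≥ R sin β}`. -/
def cutPlane (R β : ℝ) : Set ℂ :=
  {s : ℂ | ∀ t : ℝ, R * Real.sin β ≤ |t| → s ≠ (R * Real.cos β : ℂ) + t * Complex.I}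

/-- `r(s) = √(R² + s² − 2sR cos β)`, principal branch. -/
noncomputable def rfun (R β : ℝ) (s : ℂ) : ℂ :=
  ((R : ℂ) ^ 2 + s ^ 2 - 2 * s * R * Real.cos β) ^ ((1 : ℂ) / 2)

/-- `μ(s) = √k · s sin β / √(R − s cos β + r(s))`, principal branches. -/
noncomputable def mufun (k R β : ℝ) (s : ℂ) : ℂ :=
  (Real.sqrt k : ℂ) * s * Real.sin β /
    (((R : ℂ) - s * Real.cos β + rfun R β s) ^ ((1 : ℂ) / 2))

/-!
The radicand of `r` is `(s - R cos β)² + (R sin β)²`, which lies in `(-∞, 0]` exactly on the two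
cuts, so `r` is analytic on `C_{R,β}`. For every `w` and real `b`, `Re √(w² + b²) ≥ |Re w|`;
with `w = s - R cos β` and `u = Re s` this bounds `Re (R - s cos β + r(s))` below by
`R - u cos β + |u - R cos β|`, which is positive because
`(u - R cos β)² - (u cos β - R)² = sin² β (u² - R²)`. Hence the outer square root is analytic and
nonzero on the whole cut plane. The identity `(s sin β)² = r² - (R - s cos β)²` gives
`μ² = k (s cos β - R + r)` on all of `ℂ`, and for real `s > 0` every quantity is a
positive real.
-/

open Complex

namespace Complex

lemma cpow_one_div_two_sq (z : ℂ) : (z ^ (1 / 2 : ℂ)) ^ 2 = z := by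
  rw [one_div]
  exact cpow_ofNat_inv_pow z 2

lemma ofReal_cpow_one_div_two {x : ℝ} (hx : 0 ≤ x) : (x : ℂ) ^ (1 / 2 : ℂ) = (√x : ℂ) := by
  rw [Real.sqrt_eq_rpow, ofReal_cpow hx]
  norm_num

lemma sq_add_sq_mem_slitPlane {w : ℂ} {b : ℝ} (hb : b ≠ 0)
    (hw : ∀ t : ℝ, |b| ≤ |t| → w ≠ t * I) : w ^ 2 + (b : ℂ) ^ 2 ∈ slitPlane := by
  rw [mem_slitPlane_iff]
  by_contra! h
  obtain ⟨hre, him⟩ := h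
  simp only [add_re, add_im, pow_two, mul_re, mul_im, ofReal_re, ofReal_im] at hre him
  rcases mul_eq_zero.mp (by linarith : w.re * w.im = 0) with hx | hy
  · refine hw w.im (sq_le_sq.mp (by nlinarith)) (ext (by simp [hx]) (by simp))
  · have : 0 < b * b := mul_self_pos.mpr hb
    nlinarith

lemma abs_re_le_re_sq_add_sq_cpow_one_div_two (w : ℂ) (b : ℝ) :
    |w.re| ≤ ((w ^ 2 + (b : ℂ) ^ 2) ^ (1 / 2 : ℂ)).re := by
  rw [one_div, cpow_inv_two_re]
  apply Real.abs_le_sqrt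
  have htri := norm_sub_le (w ^ 2 + (b : ℂ) ^ 2) ((b : ℂ) ^ 2)
  rw [add_sub_cancel_right, norm_pow, norm_pow, norm_real, Real.norm_eq_abs, sq_abs,
    Complex.sq_norm, normSq_apply] at htri
  have hre : (w ^ 2 + (b : ℂ) ^ 2).re = w.re ^ 2 - w.im ^ 2 + b ^ 2 := by simp [sq]
  rw [hre]
  nlinarith

end Complex

lemma pos_sub_mul_add_abs_sub_mul {R c u : ℝ} (hR : 0 < R) (hc : c ^ 2 < 1) :
    0 < R - u * c + |u - R * c| := by
  rcases lt_or_ge (u * c) R with h | h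
  · linarith [abs_nonneg (u - R * c)]
  · have hu : R ^ 2 < u ^ 2 := by
      have hRuc : R ^ 2 ≤ (u * c) ^ 2 := pow_le_pow_left₀ hR.le h 2
      have hu0 : 0 < u ^ 2 := by
        have : u ≠ 0 := by rintro rfl; linarith
        positivity
      nlinarith
    have hsq : (u * c - R) ^ 2 < (u - R * c) ^ 2 := by nlinarith
    linarith [le_abs_self (u * c - R), sq_lt_sq.mp hsq]

lemma rfun_eq (R β : ℝ) (s : ℂ) :
    rfun R β s = ((s - ↑(R * Real.cos β)) ^ 2 + ↑(R * Real.sin β) ^ 2) ^ (1 / 2 : ℂ) := by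
  have h : (Real.sin β : ℂ) ^ 2 + (Real.cos β : ℂ) ^ 2 = 1 := by
    exact_mod_cast Real.sin_sq_add_cos_sq β
  rw [rfun, ofReal_mul, ofReal_mul]
  congr 1
  linear_combination (-(R : ℂ) ^ 2) * h

lemma rfun_sq (R β : ℝ) (s : ℂ) : rfun R β s ^ 2 = (R : ℂ) ^ 2 + s ^ 2 - 2 * s * R * Real.cos β :=
  cpow_one_div_two_sq _

lemma rfun_ofReal (R β s : ℝ) :
    rfun R β s = (√(R ^ 2 + s ^ 2 - 2 * s * R * Real.cos β) : ℂ) := by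
  have hq : 0 ≤ R ^ 2 + s ^ 2 - 2 * s * R * Real.cos β := by
    nlinarith [sq_nonneg (s - R * Real.cos β), sq_nonneg (R * Real.sin β), Real.sin_sq_add_cos_sq β]
  rw [rfun, ← ofReal_cpow_one_div_two hq]
  norm_cast

lemma analyticAt_rfun {R β : ℝ} (hRβ : 0 < R * Real.sin β) {s : ℂ} (hs : s ∈ cutPlane R β) :
    AnalyticAt ℂ (rfun R β) s := by
  rw [show rfun R β = _ from funext (rfun_eq R β)]
  refine AnalyticAt.cpow (by fun_prop) analyticAt_const (sq_add_sq_mem_slitPlane hRβ.ne' ?_)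
  intro t ht hst
  refine hs t (by rwa [abs_of_pos hRβ] at ht) ?_
  rw [← hst, ofReal_mul]
  ring

lemma re_sub_mul_cos_add_rfun_pos {R β : ℝ} (hR : 0 < R) (hβ : Real.sin β ≠ 0) (s : ℂ) :
    0 < ((R : ℂ) - s * Real.cos β + rfun R β s).re := by
  have hr := abs_re_le_re_sq_add_sq_cpow_one_div_two (s - ↑(R * Real.cos β)) (R * Real.sin β)
  rw [← rfun_eq] at hr
  have hc : Real.cos β ^ 2 < 1 := by
    nlinarith [Real.sin_sq_add_cos_sq β, pow_pos (abs_pos.mpr hβ) 2, sq_abs (Real.sin β)]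
  have := pos_sub_mul_add_abs_sub_mul (u := s.re) hR hc
  simp only [sub_re, ofReal_re] at hr
  simp only [add_re, sub_re, mul_re, ofReal_re, ofReal_im, mul_zero, sub_zero]
  linarith

lemma mufun_sq {k R β : ℝ} (hk : 0 ≤ k) {s : ℂ} (hs : (R : ℂ) - s * Real.cos β + rfun R β s ≠ 0) :
    mufun k R β s ^ 2 = k * (s * Real.cos β - R + rfun R β s) := by
  have h : (Real.sin β : ℂ) ^ 2 + (Real.cos β : ℂ) ^ 2 = 1 := by
    exact_mod_cast Real.sin_sq_add_cos_sq β
  rw [mufun, div_pow, cpow_one_div_two_sq, mul_pow, mul_pow, ← ofReal_pow, Real.sq_sqrt hk,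
    div_eq_iff hs]
  linear_combination (-(k : ℂ)) * rfun_sq R β s + (k * s ^ 2) * h

lemma mufun_ofReal (k R β s : ℝ) :
    mufun k R β s = (√k * s * Real.sin β /
      √(R - s * Real.cos β + √(R ^ 2 + s ^ 2 - 2 * s * R * Real.cos β)) : ℝ) := by
  have hw : 0 ≤ R - s * Real.cos β + √(R ^ 2 + s ^ 2 - 2 * s * R * Real.cos β) := by
    have : |s * Real.cos β - R| ≤ √(R ^ 2 + s ^ 2 - 2 * s * R * Real.cos β) :=
      Real.abs_le_sqrt (by nlinarith [sq_nonneg (s * Real.sin β), Real.sin_sq_add_cos_sq β])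
    linarith [le_abs_self (s * Real.cos β - R)]
  rw [mufun, rfun_ofReal, ofReal_div, ← ofReal_cpow_one_div_two hw]
  push_cast
  rfl

lemma analyticOnNhd_mufun (k : ℝ) {R β : ℝ} (hR : 0 < R) (hβ : 0 < Real.sin β) :
    AnalyticOnNhd ℂ (mufun k R β) (cutPlane R β) := by
  intro s hs
  have hr := analyticAt_rfun (mul_pos hR hβ) hs
  have hW : (R : ℂ) - s * Real.cos β + rfun R β s ∈ slitPlane :=
    Or.inl (re_sub_mul_cos_add_rfun_pos hR hβ.ne' s)
  have hsqrt : AnalyticAt ℂ (fun z ↦ ((R : ℂ) - z * Real.cos β + rfun R β z) ^ (1 / 2 : ℂ)) s :=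
    AnalyticAt.cpow (by fun_prop) analyticAt_const hW
  exact AnalyticAt.div (by fun_prop) hsqrt (by simpa using slitPlane_ne_zero hW)

theorem mufun_analytic_and_positive (k R β : ℝ) (hk : 0 < k) (hR : 0 < R)
    (hβ0 : 0 < β) (hβπ : β < Real.pi) :
    AnalyticOnNhd ℂ (mufun k R β) (cutPlane R β) ∧
    ∀ s : ℝ, 0 < s →
      (mufun k R β s) ^ 2 = k * ((s : ℂ) * Real.cos β - R + rfun R β s) ∧
      (mufun k R β s).im = 0 ∧ 0 < (mufun k R β s).re := by
  have hsin : 0 < Real.sin β := Real.sin_pos_of_pos_of_lt_pi hβ0 hβπ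
  have hW := re_sub_mul_cos_add_rfun_pos hR hsin.ne'
  refine ⟨analyticOnNhd_mufun k hR hsin, fun s hs ↦ ⟨?_, ?_, ?_⟩⟩
  · exact mufun_sq hk.le fun h ↦ (hW s).ne' (by rw [h, zero_re])
  · rw [mufun_ofReal, ofReal_im]
  · have hw := hW s
    rw [rfun_ofReal] at hw
    simp only [add_re, sub_re, mul_re, ofReal_re, ofReal_im, mul_zero, sub_zero] at hw
    rw [mufun_ofReal, ofReal_re]
    exact div_pos (by positivity) (Real.sqrt_pos.mpr hw)
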